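/- arXiv:2212.00624 — 3 statements merged into one kernel-verified Lean document; each statement's English description precedes it below -/
import Mathlib

section
/- Let S = {x ∈ ℝⁿ : h(x) ≥ 0} for a continuously differentiable function h : ℝⁿ → ℝ, and let x(t) solve ẋ = F(x) with F continuous and solutions unique in forward time. If there exists a Lipschitz continuous, strictly increasing function α : ℝ → ℝ with α(0) = 0 such that d/dt h(x(t)) ≥ −α(h(x(t))) for all t whenever x(t) is in the domain, then x(0) ∈ S implies x(t) ∈ S for all t ≥ 0. -/
/-!
Along the trajectory, `g = h ∘ x` satisfies `g' ≥ -α(g) ≥ 0` wherever `g < 0`, since `α` is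
monotone with `α 0 = 0`. If `g` ever became negative, at time `b`, then after the last time
`c ≤ b` with `g c ≥ 0` the function would be negative, hence nondecreasing, on `[c, b]`,
forcing `g b ≥ g c ≥ 0`.
-/

open Set

theorem nonneg_of_deriv_nonneg_of_neg {g : ℝ → ℝ} {a b : ℝ} (hab : a ≤ b)
    (hcont : ContinuousOn g (Icc a b)) (hdiff : DifferentiableOn ℝ g (Ioo a b))
    (hderiv : ∀ t ∈ Ioo a b, g t < 0 → 0 ≤ deriv g t) (ha : 0 ≤ g a) : 0 ≤ g b := by
  by_contra! hb
  have hT : IsCompact (Icc a b ∩ g ⁻¹' Ici 0) :=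
    isCompact_Icc.of_isClosed_subset
      (hcont.preimage_isClosed_of_isClosed isClosed_Icc isClosed_Ici) inter_subset_left
  obtain ⟨c, ⟨⟨hac, hcb⟩, hgc : 0 ≤ g c⟩, hlast⟩ :=
    hT.exists_isGreatest ⟨a, ⟨left_mem_Icc.2 hab, ha⟩⟩
  have hcb' : c < b := hcb.lt_of_ne (by rintro rfl; linarith)
  have hneg : ∀ t ∈ Ioc c b, g t < 0 := fun t ht =>
    not_le.1 fun hgt => ht.1.not_ge (hlast ⟨⟨hac.trans ht.1.le, ht.2⟩, hgt⟩)
  have hmono : MonotoneOn g (Icc c b) := by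
    refine monotoneOn_of_deriv_nonneg (convex_Icc c b)
      (hcont.mono (Icc_subset_Icc hac le_rfl))
      ?_ fun t ht => ?_
    · rw [interior_Icc]
      exact hdiff.mono (Ioo_subset_Ioo hac le_rfl)
    · rw [interior_Icc] at ht
      exact hderiv t ⟨hac.trans_lt ht.1, ht.2⟩ (hneg t ⟨ht.1, ht.2.le⟩)
  linarith [hmono ⟨le_rfl, hcb'.le⟩ ⟨hcb'.le, le_rfl⟩ hcb'.le]

theorem nonneg_of_deriv_ge_neg_comp {g α : ℝ → ℝ} {a : ℝ} (hg : Differentiable ℝ g)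
    (hα : Monotone α) (hα0 : α 0 = 0) (hderiv : ∀ t, -α (g t) ≤ deriv g t) (ha : 0 ≤ g a) :
    ∀ t ≥ a, 0 ≤ g t := fun _ ht =>
  nonneg_of_deriv_nonneg_of_neg ht hg.continuous.continuousOn hg.differentiableOn
    (fun s _ hs => by linarith [hderiv s, hα0 ▸ hα hs.le]) ha

theorem cbf_forward_invariance_general
    (n : ℕ)
    (h : EuclideanSpace ℝ (Fin n) → ℝ) (hh : ContDiff ℝ 1 h)
    (F : EuclideanSpace ℝ (Fin n) → EuclideanSpace ℝ (Fin n))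
    (x : ℝ → EuclideanSpace ℝ (Fin n))
    (hx : ∀ t, HasDerivAt x (F (x t)) t)
    (α : ℝ → ℝ)
    (hαmono : StrictMono α) (hα0 : α 0 = 0)
    (hcbf : ∀ t : ℝ, deriv (fun s => h (x s)) t ≥ -α (h (x t)))
    (h0 : h (x 0) ≥ 0) :
    ∀ t ≥ (0:ℝ), h (x t) ≥ 0 :=
  nonneg_of_deriv_ge_neg_comp
    ((hh.differentiable one_ne_zero).comp fun t => (hx t).differentiableAt)
    hαmono.monotone hα0 hcbf h0

/-- Forward invariance of the superlevel set S = {x : h x ≥ 0} under a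
control-barrier-function condition, for a trajectory of ẋ = F(x) with F
continuous and solutions unique in forward time. -/
theorem cbf_forward_invariance
    (n : ℕ)
    (h : EuclideanSpace ℝ (Fin n) → ℝ) (hh : ContDiff ℝ 1 h)
    (F : EuclideanSpace ℝ (Fin n) → EuclideanSpace ℝ (Fin n))
    (hF : Continuous F)
    (huniq : ∀ y z : ℝ → EuclideanSpace ℝ (Fin n),
      (∀ t, HasDerivAt y (F (y t)) t) → (∀ t, HasDerivAt z (F (z t)) t) →
      y 0 = z 0 → ∀ t ≥ (0:ℝ), y t = z t)
    (x : ℝ → EuclideanSpace ℝ (Fin n))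
    (hx : ∀ t, HasDerivAt x (F (x t)) t)
    (α : ℝ → ℝ) (K : NNReal) (hαlip : LipschitzWith K α)
    (hαmono : StrictMono α) (hα0 : α 0 = 0)
    (hcbf : ∀ t : ℝ, deriv (fun s => h (x s)) t ≥ -α (h (x t)))
    (h0 : h (x 0) ≥ 0) :
    ∀ t ≥ (0:ℝ), h (x t) ≥ 0 :=
  cbf_forward_invariance_general n h hh F x hx α hαmono hα0 hcbf h0
end

section
/- Consider the scalar ODE V̇ = −a V^{1+1/μ} − b V^{1−1/μ} with a, b > 0 and μ > 2, and initial condition V(0) = V₀ ≥ 0. Then every solution satisfies V(t) = 0 for all t ≥ T, where T = μπ/(2√(ab)), independently of V₀. -/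
open Real

/-- Fixed-time stability of V̇ = −aV^{1+1/μ} − bV^{1−1/μ}: every nonnegative
solution reaches 0 by time T = μπ/(2√(ab)), independently of V(0) = V₀ ≥ 0. -/
theorem fixed_time_ode_settling
    (a b μ : ℝ) (ha : 0 < a) (hb : 0 < b) (hμ : 2 < μ)
    (V : ℝ → ℝ) (V₀ : ℝ) (hV₀ : 0 ≤ V₀) (hV0 : V 0 = V₀)
    (hVnonneg : ∀ t ≥ (0:ℝ), 0 ≤ V t)
    (hode : ∀ t ≥ (0:ℝ),
      HasDerivAt V (-(a * (V t) ^ (1 + 1/μ)) - b * (V t) ^ (1 - 1/μ)) t) :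
    ∀ t ≥ μ * π / (2 * Real.sqrt (a * b)), V t = 0 := by
  have hμ0 : (0:ℝ) < μ := by linarith
  have hab : 0 < a * b := mul_pos ha hb
  have hk : 0 < Real.sqrt (a * b) := Real.sqrt_pos.mpr hab
  set k : ℝ := Real.sqrt (a * b) with hkdef
  set T : ℝ := μ * π / (2 * k) with hTdef
  have hT0 : 0 < T := by
    apply div_pos (mul_pos hμ0 Real.pi_pos) (by positivity)
  -- V is antitone on [0, ∞)
  have hanti : ∀ s t : ℝ, 0 ≤ s → s ≤ t → V t ≤ V s := by
    intro s t hs hst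
    rcases eq_or_lt_of_le hst with rfl | hlt
    · exact le_refl _
    have := antitoneOn_of_deriv_nonpos (convex_Icc s t)
      (fun x hx => ((hode x (le_trans hs hx.1)).continuousAt).continuousWithinAt)
      (fun x hx => by
        rw [interior_Icc] at hx
        exact ((hode x (le_trans hs hx.1.le)).differentiableAt).differentiableWithinAt)
      (fun x hx => by
        rw [interior_Icc] at hx
        have hx0 : (0:ℝ) ≤ x := le_trans hs hx.1.le
        rw [(hode x hx0).deriv]
        have h1 : 0 ≤ V x ^ (1 + 1/μ) := Real.rpow_nonneg (hVnonneg x hx0) _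
        have h2 : 0 ≤ V x ^ (1 - 1/μ) := Real.rpow_nonneg (hVnonneg x hx0) _
        nlinarith)
    exact this (Set.left_mem_Icc.mpr hst) (Set.right_mem_Icc.mpr hst) hst
  -- Key claim: V T = 0
  have hVT : V T = 0 := by
    by_contra hne
    have hVTpos : 0 < V T := lt_of_le_of_ne (hVnonneg T hT0.le) (Ne.symm hne)
    have hpos : ∀ t ∈ Set.Icc (0:ℝ) T, 0 < V t := fun t ht =>
      lt_of_lt_of_le hVTpos (hanti t T ht.1 ht.2)
    set c : ℝ := Real.sqrt a / Real.sqrt b with hcdef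
    have hsa : (0:ℝ) < Real.sqrt a := Real.sqrt_pos.mpr ha
    have hsb : (0:ℝ) < Real.sqrt b := Real.sqrt_pos.mpr hb
    have hc0 : 0 < c := div_pos hsa hsb
    have hcb : c * b = k := by
      rw [hcdef, hkdef, Real.sqrt_mul ha.le]
      field_simp
      nlinarith [Real.sq_sqrt hb.le, hsb]
    set g : ℝ → ℝ := fun t => Real.arctan (c * V t ^ (1/μ)) + (k/μ) * t with hgdef
    -- g has zero derivative on [0, T]
    have hgderiv : ∀ t ∈ Set.Icc (0:ℝ) T, HasDerivAt g 0 t := by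
      intro t ht
      have hVt : 0 < V t := hpos t ht
      set D : ℝ := -(a * (V t) ^ (1 + 1/μ)) - b * (V t) ^ (1 - 1/μ) with hDdef
      have h1 : HasDerivAt V D t := hode t ht.1
      have h2 : HasDerivAt (fun s => V s ^ (1/μ)) (D * (1/μ) * V t ^ (1/μ - 1)) t :=
        h1.rpow_const (Or.inl hVt.ne')
      have h3 := (h2.const_mul c).arctan
      have h4 : HasDerivAt (fun s => (k/μ) * s) (k/μ) t := by
        simpa using (hasDerivAt_id t).const_mul (k/μ)
      have h5 := h3.add h4
      have key : 1 / (1 + (c * V t ^ (1/μ))^2) * (c * (D * (1/μ) * V t ^ (1/μ - 1))) + k/μ = 0 := by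
        set w : ℝ := V t ^ (2/μ) with hwdef
        have hw0 : 0 < w := Real.rpow_pos_of_pos hVt _
        have e1 : V t ^ (1/μ - 1) * V t ^ (1 + 1/μ) = w := by
          rw [← Real.rpow_add hVt, hwdef]; ring_nf
        have e2 : V t ^ (1/μ - 1) * V t ^ (1 - 1/μ) = 1 := by
          rw [← Real.rpow_add hVt]
          norm_num
        have e3 : (V t ^ (1/μ))^2 = w := by
          rw [← Real.rpow_natCast (V t ^ (1/μ)) 2, ← Real.rpow_mul hVt.le, hwdef]
          norm_num; ring_nf
        have hc2 : c^2 = a / b := by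
          rw [hcdef, div_pow, Real.sq_sqrt ha.le, Real.sq_sqrt hb.le]
        have hden : 1 + (c * V t ^ (1/μ))^2 = (b + a * w) / b := by
          rw [mul_pow, e3, hc2]; field_simp
        have hnum : c * (D * (1/μ) * V t ^ (1/μ - 1)) = -(c / μ) * (a * w + b) := by
          rw [hDdef]
          have : (-(a * (V t) ^ (1 + 1/μ)) - b * (V t) ^ (1 - 1/μ)) * (1/μ) * V t ^ (1/μ - 1)
              = (1/μ) * (-(a * (V t ^ (1/μ - 1) * V t ^ (1 + 1/μ)))
                - b * (V t ^ (1/μ - 1) * V t ^ (1 - 1/μ))) := by ring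
          rw [this, e1, e2]; ring
        rw [hnum, hden, ← hcb]
        have hbw : b + a * w ≠ 0 := by positivity
        field_simp
        ring
      rw [key] at h5
      exact h5
    -- hence g is constant on [0, T]
    have hgconst : g T = g 0 := by
      have hdiff : DifferentiableOn ℝ g (Set.Icc 0 T) := fun x hx =>
        ((hgderiv x hx).differentiableAt).differentiableWithinAt
      have hconst := constant_of_derivWithin_zero hdiff (fun x hx => by
        have hx' : x ∈ Set.Icc (0:ℝ) T := ⟨hx.1, hx.2.le⟩
        exact ((hgderiv x hx').hasDerivWithinAt).derivWithin
          (uniqueDiffOn_Icc hT0 x hx'))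
      exact hconst T (Set.right_mem_Icc.mpr hT0.le)
    -- contradiction: g T ≥ π/2 > g 0
    have hkT : (k/μ) * T = π / 2 := by
      rw [hTdef]; field_simp
    have hgT : π / 2 ≤ g T := by
      have harc : 0 ≤ Real.arctan (c * V T ^ (1/μ)) := by
        rw [← Real.arctan_zero]
        exact Real.arctan_strictMono.monotone (by positivity)
      rw [hgdef]; simp only []
      rw [hkT] at *
      nlinarith [hkT]
    have hg0 : g 0 < π / 2 := by
      rw [hgdef]
      simp only [mul_zero, add_zero]
      exact Real.arctan_lt_pi_div_two _
    linarith [hgconst ▸ hgT]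
  -- conclude
  intro t ht
  have h1 : V t ≤ 0 := hVT ▸ hanti T t hT0.le ht
  exact le_antisymm h1 (hVnonneg t (le_trans hT0.le ht))
end

section
/- Suppose h : ℝⁿ → ℝ is continuously differentiable and x(t) solves ẋ = f(x) + g(x)u(t) + d(x) where ‖d(x) − d̂(t,x)‖_∞ ≤ δ(t) pointwise. If for all t the control satisfies ∇h(x(t))·(f(x(t)) + g(x(t))u(t) + d̂(t,x(t))) − δ(t)‖∇h(x(t))‖₁ ≥ −α(h(x(t))) with α locally Lipschitz, strictly increasing, α(0)=0, and h(x(0)) ≥ 0, then h(x(t)) ≥ 0 for all t ≥ 0. -/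
/-!
Along the trajectory the chain rule gives `d/dt h(x t) = ∇h · (f + g u + d)`, and since `d - d̂` is
bounded entrywise by `δ`, `∇h · (d - d̂) ≥ -δ ‖∇h‖₁`; so the robust CBF inequality yields
`d/dt h(x t) ≥ -α(h(x t))`. Wherever `h(x t) < 0` we have `α(h(x t)) < α 0 = 0`, so `h ∘ x` is
strictly increasing there: after the last time in `[0, t]` at which it is nonnegative it cannot
become negative.
-/

open Set Matrix

theorem abs_map_le_mul_sum_abs_map_single {ι F : Type*} [Fintype ι] [DecidableEq ι]
    [FunLike F (ι → ℝ) ℝ] [LinearMapClass F ℝ (ι → ℝ) ℝ] (L : F) {e : ι → ℝ} {c : ℝ}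
    (he : ∀ i, |e i| ≤ c) : |L e| ≤ c * ∑ i, |L (Pi.single i 1)| := by
  have hexpand : L e = ∑ i, e i * L (Pi.single i 1) := by
    conv_lhs => rw [← Finset.univ_sum_single e]
    simp only [map_sum]
    refine Finset.sum_congr rfl fun i _ => ?_
    rw [← smul_eq_mul, ← map_smul, ← Pi.single_smul', smul_eq_mul, mul_one]
  calc |L e| ≤ ∑ i, |e i| * |L (Pi.single i 1)| := by
        rw [hexpand]
        exact (Finset.abs_sum_le_sum_abs _ _).trans_eq (by simp only [abs_mul])
    _ ≤ ∑ i, c * |L (Pi.single i 1)| := by gcongr with i; exact he i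
    _ = c * ∑ i, |L (Pi.single i 1)| := Finset.mul_sum _ _ _ |>.symm

theorem nonneg_of_nonneg_of_deriv_pos_of_neg {v v' : ℝ → ℝ} {a b : ℝ}
    (hcont : ContinuousOn v (Icc a b)) (hderiv : ∀ t ∈ Ioo a b, HasDerivAt v (v' t) t)
    (hpos : ∀ t ∈ Ioo a b, v t < 0 → 0 < v' t) (hab : a ≤ b) (ha : 0 ≤ v a) : 0 ≤ v b := by
  by_contra! hb
  set S := Icc a b ∩ v ⁻¹' Ici 0
  have hS : IsCompact S := isCompact_Icc.of_isClosed_subset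
    (hcont.preimage_isClosed_of_isClosed isClosed_Icc isClosed_Ici) inter_subset_left
  obtain ⟨⟨has, hsb⟩, hvs : 0 ≤ v (sSup S)⟩ : sSup S ∈ S := hS.sSup_mem ⟨a, ⟨le_rfl, hab⟩, ha⟩
  set s := sSup S
  have hsb' : s < b := hsb.lt_of_ne fun hsb_eq => by rw [hsb_eq] at hvs; exact hb.not_ge hvs
  have hneg : ∀ t ∈ Ioo s b, v t < 0 := fun t ht => by
    by_contra! hvt
    exact ht.1.not_ge (le_csSup hS.bddAbove ⟨⟨has.trans ht.1.le, ht.2.le⟩, hvt⟩)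
  have hmono : StrictMonoOn v (Icc s b) := by
    refine strictMonoOn_of_hasDerivWithinAt_pos (f' := v') (convex_Icc s b)
      (hcont.mono (Icc_subset_Icc_left has)) (fun t ht => ?_) fun t ht => ?_
    all_goals rw [interior_Icc] at ht
    · exact (hderiv t ⟨has.trans_lt ht.1, ht.2⟩).hasDerivWithinAt
    · exact hpos t ⟨has.trans_lt ht.1, ht.2⟩ (hneg t ht)
  have : v s < v b := hmono (left_mem_Icc.2 hsb'.le) (right_mem_Icc.2 hsb'.le) hsb'
  linarith

theorem robust_cbf_safety_general
    (n m : ℕ) (h : (Fin n → ℝ) → ℝ) (hh : ContDiff ℝ 1 h)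
    (f : (Fin n → ℝ) → (Fin n → ℝ))
    (g : (Fin n → ℝ) → Matrix (Fin n) (Fin m) ℝ)
    (d : (Fin n → ℝ) → (Fin n → ℝ))
    (dhat : ℝ → (Fin n → ℝ) → (Fin n → ℝ))
    (u : ℝ → (Fin m → ℝ)) (δ : ℝ → ℝ)
    (x : ℝ → (Fin n → ℝ))
    (hx : ∀ t, HasDerivAt x (f (x t) + (g (x t)).mulVec (u t) + d (x t)) t)
    (hest : ∀ (t : ℝ) (y : Fin n → ℝ) (i : Fin n), |d y i - dhat t y i| ≤ δ t)
    (α : ℝ → ℝ)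
    (hαmono : StrictMono α) (hα0 : α 0 = 0)
    (hcbf : ∀ t : ℝ,
      fderiv ℝ h (x t) (f (x t) + (g (x t)).mulVec (u t) + dhat t (x t))
        - δ t * (∑ i : Fin n, |fderiv ℝ h (x t) (Pi.single i 1)|)
        ≥ -α (h (x t)))
    (h0 : h (x 0) ≥ 0) :
    ∀ t ≥ (0:ℝ), h (x t) ≥ 0 := by
  intro t ht
  have hderiv (s : ℝ) : HasDerivAt (fun s => h (x s))
      (fderiv ℝ h (x s) (f (x s) + (g (x s)).mulVec (u s) + d (x s))) s :=
    (hh.differentiable one_ne_zero).differentiableAt.hasFDerivAt.comp_hasDerivAt s (hx s)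
  have hrate (s : ℝ) :
      -α (h (x s)) ≤ fderiv ℝ h (x s) (f (x s) + (g (x s)).mulVec (u s) + d (x s)) := by
    have hsplit : f (x s) + (g (x s)).mulVec (u s) + d (x s)
        = f (x s) + (g (x s)).mulVec (u s) + dhat s (x s) + (d (x s) - dhat s (x s)) := by abel
    have herr := abs_map_le_mul_sum_abs_map_single (fderiv ℝ h (x s))
      (e := d (x s) - dhat s (x s)) (hest s (x s))
    rw [hsplit, map_add]
    linarith [hcbf s, neg_abs_le (fderiv ℝ h (x s) (d (x s) - dhat s (x s)))]
  have hpos (s : ℝ) (hs : h (x s) < 0) :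
      0 < fderiv ℝ h (x s) (f (x s) + (g (x s)).mulVec (u s) + d (x s)) := by
    have : α (h (x s)) < 0 := hα0 ▸ hαmono hs
    linarith [hrate s]
  exact nonneg_of_nonneg_of_deriv_pos_of_neg
    (fun s _ => (hderiv s).continuousAt.continuousWithinAt)
    (fun s _ => hderiv s) (fun s _ => hpos s) ht h0

/-- Robust CBF safety with a time-varying estimation error bound δ(t): if the
robustified CBF inequality holds along the trajectory, then {h ≥ 0} is
forward invariant. -/
theorem robust_cbf_safety
    (n m : ℕ) (h : (Fin n → ℝ) → ℝ) (hh : ContDiff ℝ 1 h)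
    (f : (Fin n → ℝ) → (Fin n → ℝ))
    (g : (Fin n → ℝ) → Matrix (Fin n) (Fin m) ℝ)
    (d : (Fin n → ℝ) → (Fin n → ℝ))
    (dhat : ℝ → (Fin n → ℝ) → (Fin n → ℝ))
    (u : ℝ → (Fin m → ℝ)) (δ : ℝ → ℝ)
    (x : ℝ → (Fin n → ℝ))
    (hx : ∀ t, HasDerivAt x (f (x t) + (g (x t)).mulVec (u t) + d (x t)) t)
    (hest : ∀ (t : ℝ) (y : Fin n → ℝ) (i : Fin n), |d y i - dhat t y i| ≤ δ t)
    (α : ℝ → ℝ) (hα : LocallyLipschitz α)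
    (hαmono : StrictMono α) (hα0 : α 0 = 0)
    (hcbf : ∀ t : ℝ,
      fderiv ℝ h (x t) (f (x t) + (g (x t)).mulVec (u t) + dhat t (x t))
        - δ t * (∑ i : Fin n, |fderiv ℝ h (x t) (Pi.single i 1)|)
        ≥ -α (h (x t)))
    (h0 : h (x 0) ≥ 0) :
    ∀ t ≥ (0:ℝ), h (x t) ≥ 0 :=
  robust_cbf_safety_general n m h hh f g d dhat u δ x hx hest α hαmono hα0 hcbf h0
end
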